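/- Let T be a finite tree with a canonical coloring of its vertices into red, orange, and green satisfying: (i) the induced subforest on orange vertices has a perfect matching, (ii) every green vertex has at least two red neighbors, (iii) every red vertex has only green neighbors. Then such a coloring of T is unique. -/
import Mathlib

/-- A matching of a graph `G`: a set of edges of `G`, pairwise vertex-disjoint. -/
def IsMatching {V : Type} (G : SimpleGraph V) (M : Finset (Sym2 V)) : Prop :=
  (∀ e ∈ M, e ∈ G.edgeSet) ∧
  ∀ e ∈ M, ∀ f ∈ M, e ≠ f → ∀ v : V, v ∈ e → v ∉ f

/-- A vertex is covered by a matching if it belongs to some edge of it. -/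
def Covers {V : Type} (M : Finset (Sym2 V)) (v : V) : Prop := ∃ e ∈ M, v ∈ e

/-- The three colors of the canonical coloring. -/
inductive Col : Type
  | red : Col
  | orange : Col
  | green : Col
deriving DecidableEq

/-- A coloring of the vertices of `G` into red, orange, green such that:
(i) the induced forest on orange vertices has a perfect matching,
(ii) every green vertex has at least two red neighbors,
(iii) every red vertex has only green neighbors. -/
def GoodColoring {V : Type} (G : SimpleGraph V) (c : V → Col) : Prop :=
  (∃ M : Finset (Sym2 V), IsMatching G M ∧
      (∀ e ∈ M, ∀ v : V, v ∈ e → c v = Col.orange) ∧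
      (∀ v : V, c v = Col.orange → Covers M v)) ∧
  (∀ v : V, c v = Col.green →
      ∃ u w : V, u ≠ w ∧ G.Adj v u ∧ G.Adj v w ∧ c u = Col.red ∧ c w = Col.red) ∧
  (∀ v : V, c v = Col.red → ∀ u : V, G.Adj v u → c u = Col.green)

namespace CanonicalAux

open SimpleGraph

variable {V : Type}

/-- The goodness conditions, relativized to a finite set `S` of vertices. -/
def GoodOn (G : SimpleGraph V) (S : Finset V) (c : V → Col) : Prop :=
  (∃ M : Finset (Sym2 V), IsMatching G M ∧
      (∀ e ∈ M, ∀ v : V, v ∈ e → v ∈ S ∧ c v = Col.orange) ∧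
      (∀ v ∈ S, c v = Col.orange → Covers M v)) ∧
  (∀ v ∈ S, c v = Col.green →
      ∃ u w : V, u ≠ w ∧ u ∈ S ∧ w ∈ S ∧ G.Adj v u ∧ G.Adj v w ∧
        c u = Col.red ∧ c w = Col.red) ∧
  (∀ v ∈ S, c v = Col.red → ∀ u ∈ S, G.Adj v u → c u = Col.green)

lemma edge_other {G : SimpleGraph V} {e : Sym2 V} (he : e ∈ G.edgeSet) {v : V} (hv : v ∈ e) :
    ∃ w, e = s(v, w) ∧ G.Adj v w := by
  induction e with
  | _ a b =>
    rw [SimpleGraph.mem_edgeSet] at he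
    rcases Sym2.mem_iff.mp hv with rfl | rfl
    · exact ⟨b, rfl, he⟩
    · exact ⟨a, Sym2.eq_swap, he.symm⟩

/-- In a finite tree, every nonempty vertex set `S` contains a vertex with at most one
neighbor inside `S`. -/
lemma exists_leaf {G : SimpleGraph V} [Fintype V] [DecidableEq V] (hT : G.IsTree)
    {S : Finset V} (hS : S.Nonempty) :
    ∃ v ∈ S, ∀ w₁ ∈ S, ∀ w₂ ∈ S, G.Adj v w₁ → G.Adj v w₂ → w₁ = w₂ := by
  obtain ⟨r, hr⟩ := hS
  obtain ⟨v, hvS, hmax⟩ := S.exists_max_image (fun x => G.dist r x) ⟨r, hr⟩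
  refine ⟨v, hvS, ?_⟩
  have hconn := hT.isConnected
  have hacy := ((SimpleGraph.isTree_iff G).mp hT).2
  have key : ∀ w : V, w ∈ S → G.Adj v w →
      ∃ p : G.Walk r w, p.IsPath ∧ v ∉ p.support := by
    intro w hw hadj
    obtain ⟨p, hp, hl⟩ := hconn.exists_path_of_dist r w
    refine ⟨p, hp, ?_⟩
    intro hvp
    have h1 : G.dist r v ≤ (p.takeUntil v hvp).length := SimpleGraph.dist_le _
    have h2 : (p.takeUntil v hvp).length + (p.dropUntil v hvp).length = p.length := by
      have := congrArg SimpleGraph.Walk.length (p.take_spec hvp)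
      rwa [SimpleGraph.Walk.length_append] at this
    have h3 : 1 ≤ (p.dropUntil v hvp).length := by
      rcases Nat.eq_zero_or_pos (p.dropUntil v hvp).length with h0 | h0
      · exact absurd (SimpleGraph.Walk.eq_of_length_eq_zero h0) hadj.ne
      · exact h0
    have h4 : G.dist r w ≤ G.dist r v := hmax w hw
    omega
  intro w₁ hw₁ w₂ hw₂ ha₁ ha₂
  obtain ⟨p₁, hp₁, hv₁⟩ := key w₁ hw₁ ha₁
  obtain ⟨p₂, hp₂, hv₂⟩ := key w₂ hw₂ ha₂
  have hq₁ : (SimpleGraph.Walk.cons ha₁ p₁.reverse).IsPath := by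
    rw [SimpleGraph.Walk.cons_isPath_iff]
    refine ⟨hp₁.reverse, ?_⟩
    rw [SimpleGraph.Walk.support_reverse, List.mem_reverse]
    exact hv₁
  have hq₂ : (SimpleGraph.Walk.cons ha₂ p₂.reverse).IsPath := by
    rw [SimpleGraph.Walk.cons_isPath_iff]
    refine ⟨hp₂.reverse, ?_⟩
    rw [SimpleGraph.Walk.support_reverse, List.mem_reverse]
    exact hv₂
  have huniq := SimpleGraph.isAcyclic_iff_path_unique.mp hacy
    (⟨_, hq₁⟩ : G.Path v r) (⟨_, hq₂⟩ : G.Path v r)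
  have hwalks : (SimpleGraph.Walk.cons ha₁ p₁.reverse) = (SimpleGraph.Walk.cons ha₂ p₂.reverse) :=
    congrArg Subtype.val huniq
  have hsup := congrArg SimpleGraph.Walk.support hwalks
  rw [SimpleGraph.Walk.support_cons, SimpleGraph.Walk.support_cons,
    p₁.reverse.support_eq_cons, p₂.reverse.support_eq_cons] at hsup
  simp only [List.cons.injEq] at hsup
  exact hsup.2.1

variable {G : SimpleGraph V} {S : Finset V} {c c' : V → Col} {v u : V}

lemma leaf_red (h : GoodOn G S c) (hv : v ∈ S)
    (hiso : ∀ u ∈ S, ¬ G.Adj v u) : c v = Col.red := by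
  obtain ⟨⟨M, hM, hend, hcov⟩, hgreen, hred⟩ := h
  cases hcv : c v with
  | red => rfl
  | orange =>
    obtain ⟨e, heM, hve⟩ := hcov v hv hcv
    obtain ⟨w, rfl, hadj⟩ := edge_other (hM.1 e heM) hve
    have hw : w ∈ S := (hend _ heM w (Sym2.mem_mk_right v w)).1
    exact absurd hadj (hiso w hw)
  | green =>
    obtain ⟨u₁, u₂, hne, hu₁, hu₂, ha₁, ha₂, _, _⟩ := hgreen v hv hcv
    exact absurd ha₁ (hiso u₁ hu₁)

lemma leaf_pair (h : GoodOn G S c) (hv : v ∈ S) (hu : u ∈ S) (hadj : G.Adj v u)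
    (huniq : ∀ w ∈ S, G.Adj v w → w = u) :
    (c v = Col.orange ∧ c u = Col.orange) ∨ (c v = Col.red ∧ c u = Col.green) := by
  obtain ⟨⟨M, hM, hend, hcov⟩, hgreen, hred⟩ := h
  cases hcv : c v with
  | red => exact Or.inr ⟨rfl, hred v hv hcv u hu hadj⟩
  | orange =>
    obtain ⟨e, heM, hve⟩ := hcov v hv hcv
    obtain ⟨w, rfl, hadjw⟩ := edge_other (hM.1 e heM) hve
    have hw := hend _ heM w (Sym2.mem_mk_right v w)
    have : w = u := huniq w hw.1 hadjw
    exact Or.inl ⟨rfl, this ▸ hw.2⟩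
  | green =>
    obtain ⟨u₁, u₂, hne, hu₁, hu₂, ha₁, ha₂, _, _⟩ := hgreen v hv hcv
    exact absurd ((huniq u₁ hu₁ ha₁).trans (huniq u₂ hu₂ ha₂).symm) hne

lemma restrict_isolated [DecidableEq V] (h : GoodOn G S c) (hv : v ∈ S)
    (hiso : ∀ u ∈ S, ¬ G.Adj v u) : GoodOn G (S.erase v) c := by
  have hcv := leaf_red h hv hiso
  obtain ⟨⟨M, hM, hend, hcov⟩, hgreen, hred⟩ := h
  refine ⟨⟨M, hM, ?_, ?_⟩, ?_, ?_⟩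
  · intro e he x hx
    have hx' := hend e he x hx
    refine ⟨Finset.mem_erase.mpr ⟨?_, hx'.1⟩, hx'.2⟩
    rintro rfl; rw [hcv] at hx'; exact absurd hx'.2 (by simp)
  · exact fun x hx hcx => hcov x (Finset.mem_of_mem_erase hx) hcx
  · intro x hx hcx
    obtain ⟨u₁, u₂, hne, hu₁, hu₂, ha₁, ha₂, hr₁, hr₂⟩ :=
      hgreen x (Finset.mem_of_mem_erase hx) hcx
    have hxS := Finset.mem_of_mem_erase hx
    refine ⟨u₁, u₂, hne, Finset.mem_erase.mpr ⟨?_, hu₁⟩, Finset.mem_erase.mpr ⟨?_, hu₂⟩,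
      ha₁, ha₂, hr₁, hr₂⟩
    · rintro rfl; exact hiso x hxS ha₁.symm
    · rintro rfl; exact hiso x hxS ha₂.symm
  · intro x hx hcx y hy hadj
    exact hred x (Finset.mem_of_mem_erase hx) hcx y (Finset.mem_of_mem_erase hy) hadj

lemma mem_sdiff_pair [DecidableEq V] {x : V} :
    x ∈ S \ {v, u} ↔ x ∈ S ∧ x ≠ v ∧ x ≠ u := by
  simp [Finset.mem_sdiff, not_or]

lemma restrict_pair [DecidableEq V] (h : GoodOn G S c) (hv : v ∈ S) (hu : u ∈ S)
    (hadj : G.Adj v u) (huniq : ∀ w ∈ S, G.Adj v w → w = u) :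
    GoodOn G (S \ {v, u}) c := by
  rcases leaf_pair h hv hu hadj huniq with ⟨hcv, hcu⟩ | ⟨hcv, hcu⟩
  · -- orange / orange case
    obtain ⟨⟨M, hM, hend, hcov⟩, hgreen, hred⟩ := h
    obtain ⟨e, heM, hve⟩ := hcov v hv hcv
    obtain ⟨w, rfl, hadjw⟩ := edge_other (hM.1 e heM) hve
    have hw := hend _ heM w (Sym2.mem_mk_right v w)
    obtain rfl : w = u := huniq w hw.1 hadjw
    refine ⟨⟨M.erase s(v, w), ⟨?_, ?_⟩, ?_, ?_⟩, ?_, ?_⟩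
    · exact fun f hf => hM.1 f (Finset.mem_of_mem_erase hf)
    · exact fun f hf g hg hne x hx =>
        hM.2 f (Finset.mem_of_mem_erase hf) g (Finset.mem_of_mem_erase hg) hne x hx
    · intro f hf x hx
      have hfM := Finset.mem_of_mem_erase hf
      have hfe := Finset.ne_of_mem_erase hf
      have hx' := hend f hfM x hx
      refine ⟨mem_sdiff_pair.mpr ⟨hx'.1, ?_, ?_⟩, hx'.2⟩
      · rintro rfl
        exact hM.2 f hfM _ heM hfe x hx (Sym2.mem_mk_left x _)
      · rintro rfl
        exact hM.2 f hfM _ heM hfe x hx (Sym2.mem_mk_right v x)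
    · intro x hx hcx
      obtain ⟨hxS, hxv, hxu⟩ := mem_sdiff_pair.mp hx
      obtain ⟨f, hfM, hxf⟩ := hcov x hxS hcx
      refine ⟨f, Finset.mem_erase.mpr ⟨?_, hfM⟩, hxf⟩
      rintro rfl
      rcases Sym2.mem_iff.mp hxf with rfl | rfl
      · exact hxv rfl
      · exact hxu rfl
    · intro x hx hcx
      obtain ⟨hxS, hxv, hxu⟩ := mem_sdiff_pair.mp hx
      obtain ⟨u₁, u₂, hne, hu₁, hu₂, ha₁, ha₂, hr₁, hr₂⟩ := hgreen x hxS hcx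
      refine ⟨u₁, u₂, hne, mem_sdiff_pair.mpr ⟨hu₁, ?_, ?_⟩,
        mem_sdiff_pair.mpr ⟨hu₂, ?_, ?_⟩, ha₁, ha₂, hr₁, hr₂⟩
      · rintro rfl; rw [hcv] at hr₁; exact absurd hr₁ (by simp)
      · rintro rfl; rw [hcu] at hr₁; exact absurd hr₁ (by simp)
      · rintro rfl; rw [hcv] at hr₂; exact absurd hr₂ (by simp)
      · rintro rfl; rw [hcu] at hr₂; exact absurd hr₂ (by simp)
    · intro x hx hcx y hy hadjxy
      exact hred x (mem_sdiff_pair.mp hx).1 hcx y (mem_sdiff_pair.mp hy).1 hadjxy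
  · -- red / green case
    obtain ⟨⟨M, hM, hend, hcov⟩, hgreen, hred⟩ := h
    refine ⟨⟨M, hM, ?_, ?_⟩, ?_, ?_⟩
    · intro f hf x hx
      have hx' := hend f hf x hx
      refine ⟨mem_sdiff_pair.mpr ⟨hx'.1, ?_, ?_⟩, hx'.2⟩
      · rintro rfl; rw [hcv] at hx'; exact absurd hx'.2 (by simp)
      · rintro rfl; rw [hcu] at hx'; exact absurd hx'.2 (by simp)
    · exact fun x hx hcx => hcov x (mem_sdiff_pair.mp hx).1 hcx
    · intro x hx hcx
      obtain ⟨hxS, hxv, hxu⟩ := mem_sdiff_pair.mp hx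
      obtain ⟨u₁, u₂, hne, hu₁, hu₂, ha₁, ha₂, hr₁, hr₂⟩ := hgreen x hxS hcx
      refine ⟨u₁, u₂, hne, mem_sdiff_pair.mpr ⟨hu₁, ?_, ?_⟩,
        mem_sdiff_pair.mpr ⟨hu₂, ?_, ?_⟩, ha₁, ha₂, hr₁, hr₂⟩
      · rintro rfl; exact hxu (huniq x hxS ha₁.symm)
      · rintro rfl; rw [hcu] at hr₁; exact absurd hr₁ (by simp)
      · rintro rfl; exact hxu (huniq x hxS ha₂.symm)
      · rintro rfl; rw [hcu] at hr₂; exact absurd hr₂ (by simp)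
    · intro x hx hcx y hy hadjxy
      exact hred x (mem_sdiff_pair.mp hx).1 hcx y (mem_sdiff_pair.mp hy).1 hadjxy

lemma no_mix [DecidableEq V] (hc : GoodOn G S c) (hc' : GoodOn G S c')
    (hagree : ∀ x ∈ S \ ({v, u} : Finset V), c x = c' x)
    (hv : v ∈ S) (hu : u ∈ S)
    (h1 : c u = Col.orange) (h2u : c' u = Col.green) : False := by
  obtain ⟨r₁, r₂, hne, hr₁S, hr₂S, ha₁, ha₂, hred₁, hred₂⟩ := hc'.2.1 u hu h2u
  obtain ⟨r, hrS, har, hredr, hrv⟩ :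
      ∃ r, r ∈ S ∧ G.Adj u r ∧ c' r = Col.red ∧ r ≠ v := by
    by_cases hcase : r₁ = v
    · exact ⟨r₂, hr₂S, ha₂, hred₂, fun h => hne (hcase.trans h.symm)⟩
    · exact ⟨r₁, hr₁S, ha₁, hred₁, hcase⟩
  have hrmem : r ∈ S \ ({v, u} : Finset V) :=
    mem_sdiff_pair.mpr ⟨hrS, hrv, har.ne'⟩
  have hcr : c r = Col.red := (hagree r hrmem).trans hredr
  have := hc.2.2 r hrS hcr u hu har.symm
  rw [h1] at this
  exact absurd this (by simp)

lemma goodOn_unique [Fintype V] [DecidableEq V] {G : SimpleGraph V} (hT : G.IsTree)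
    (c c' : V → Col) :
    ∀ S : Finset V, GoodOn G S c → GoodOn G S c' → ∀ x ∈ S, c x = c' x := by
  intro S
  induction S using Finset.strongInduction with
  | _ S IH =>
    intro hc hc' x hx
    obtain ⟨v, hvS, hleaf⟩ := exists_leaf hT ⟨x, hx⟩
    by_cases hnb : ∃ u ∈ S, G.Adj v u
    · obtain ⟨u, huS, hadj⟩ := hnb
      have huniq : ∀ w ∈ S, G.Adj v w → w = u := fun w hw haw => hleaf w hw u huS haw hadj
      have hsub : S \ ({v, u} : Finset V) ⊂ S := by
        refine Finset.sdiff_ssubset ?_ ⟨v, Finset.mem_insert_self v {u}⟩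
        intro y hy
        rcases Finset.mem_insert.mp hy with rfl | hy
        · exact hvS
        · rw [Finset.mem_singleton] at hy; exact hy ▸ huS
      have hagree : ∀ y ∈ S \ ({v, u} : Finset V), c y = c' y :=
        IH _ hsub (restrict_pair hc hvS huS hadj huniq) (restrict_pair hc' hvS huS hadj huniq)
      have hcases := leaf_pair hc hvS huS hadj huniq
      have hcases' := leaf_pair hc' hvS huS hadj huniq
      have hvu : c v = c' v ∧ c u = c' u := by
        rcases hcases with ⟨h1, h2⟩ | ⟨h1, h2⟩ <;> rcases hcases' with ⟨h1', h2'⟩ | ⟨h1', h2'⟩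
        · exact ⟨h1.trans h1'.symm, h2.trans h2'.symm⟩
        · exact absurd (no_mix hc hc' hagree hvS huS h2 h2') id
        · exact absurd (no_mix hc' hc (fun y hy => (hagree y hy).symm) hvS huS h2' h2) id
        · exact ⟨h1.trans h1'.symm, h2.trans h2'.symm⟩
      by_cases hxv : x = v
      · exact hxv ▸ hvu.1
      by_cases hxu : x = u
      · exact hxu ▸ hvu.2
      exact hagree x (mem_sdiff_pair.mpr ⟨hx, hxv, hxu⟩)
    · have hiso : ∀ u ∈ S, ¬ G.Adj v u := fun u hu ha => hnb ⟨u, hu, ha⟩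
      by_cases hxv : x = v
      · subst hxv
        exact (leaf_red hc hvS hiso).trans (leaf_red hc' hvS hiso).symm
      · exact IH _ (Finset.erase_ssubset hvS) (restrict_isolated hc hvS hiso)
          (restrict_isolated hc' hvS hiso) x (Finset.mem_erase.mpr ⟨hxv, hx⟩)

lemma goodColoring_goodOn [Fintype V] {G : SimpleGraph V} {c : V → Col}
    (h : GoodColoring G c) : GoodOn G Finset.univ c := by
  obtain ⟨⟨M, hM, hend, hcov⟩, hgreen, hred⟩ := h
  refine ⟨⟨M, hM, fun e he x hx => ⟨Finset.mem_univ x, hend e he x hx⟩,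
    fun x _ hx => hcov x hx⟩, ?_, ?_⟩
  · intro x _ hx
    obtain ⟨u, w, hne, ha₁, ha₂, h₁, h₂⟩ := hgreen x hx
    exact ⟨u, w, hne, Finset.mem_univ u, Finset.mem_univ w, ha₁, ha₂, h₁, h₂⟩
  · exact fun x _ hx y _ hadj => hred x hx y hadj

end CanonicalAux

/-- The canonical coloring of a finite tree is unique. -/
theorem canonical_coloring_unique {V : Type} [Fintype V] [DecidableEq V]
    (G : SimpleGraph V) (hT : G.IsTree) (c c' : V → Col)
    (hc : GoodColoring G c) (hc' : GoodColoring G c') : c = c' := by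
  funext x
  exact CanonicalAux.goodOn_unique hT c c' Finset.univ
    (CanonicalAux.goodColoring_goodOn hc) (CanonicalAux.goodColoring_goodOn hc')
    x (Finset.mem_univ x)
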